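/- arXiv:1108.2878 — 2 statements merged into one kernel-verified Lean document; each statement's English description precedes it below -/
import Mathlib

section
/- Let 1 ≤ k ≤ n−1 and let a ∈ M_n(ℂ) be a matrix of rank k. Then the restriction of Γ_k : x ↦ rng(x) to the Green class R_a (with subspace topology) is a continuous open surjection from R_a onto 𝖦_k, and the restriction of Δ_k : x ↦ nul(x) to the Green class L_a is a continuous open surjection from L_a onto 𝖦_{n−k}. -/
open Matrix

/-- `Mn n` is the multiplicative monoid of `n × n` complex matrices. -/
abbrev Mn (n : ℕ) : Type := Matrix (Fin n) (Fin n) ℂ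

/-- A subset of `Mn n` is algebraic if it is the common zero set of a family of
polynomials in the `n²` matrix entries. -/
def IsAlgebraicMatrixSet {n : ℕ} (X : Set (Mn n)) : Prop :=
  ∃ s : Set (MvPolynomial (Fin n × Fin n) ℂ),
    X = {x | ∀ p ∈ s, MvPolynomial.eval (fun ij => x ij.1 ij.2) p = 0}

/-- `M` is a regular irreducible algebraic monoid in `Mn n`. -/
structure IsRegIrrAlgMonoid {n : ℕ} (M : Set (Mn n)) : Prop where
  one_mem : (1 : Mn n) ∈ M
  mul_mem : ∀ a ∈ M, ∀ b ∈ M, a * b ∈ M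
  algebraic : IsAlgebraicMatrixSet M
  regular : ∀ a ∈ M, ∃ x ∈ M, a * x * a = a
  irreducible : ¬ ∃ A B : Set (Mn n), IsAlgebraicMatrixSet A ∧ IsAlgebraicMatrixSet B ∧
      A ∪ B = M ∧ A ≠ M ∧ B ≠ M

/-- The group of units of the monoid `M` (as a subset of `Mn n`). -/
def unitsOf {n : ℕ} (M : Set (Mn n)) : Set (Mn n) :=
  {u | u ∈ M ∧ ∃ v ∈ M, u * v = 1 ∧ v * u = 1}

def lSet {n : ℕ} (S : Set (Mn n)) (a : Mn n) : Set (Mn n) := {y | ∃ x ∈ S, y = x * a}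
def rSet {n : ℕ} (S : Set (Mn n)) (a : Mn n) : Set (Mn n) := {y | ∃ x ∈ S, y = a * x}
def jSet {n : ℕ} (S : Set (Mn n)) (a : Mn n) : Set (Mn n) :=
  {y | ∃ x ∈ S, ∃ z ∈ S, y = x * a * z}

/-- Green's relation 𝓛 in the monoid `S`: `a 𝓛 b` iff `Sa = Sb`. -/
def GreenL {n : ℕ} (S : Set (Mn n)) (a b : Mn n) : Prop := lSet S a = lSet S b
/-- Green's relation 𝓡 in the monoid `S`: `a 𝓡 b` iff `aS = bS`. -/
def GreenR {n : ℕ} (S : Set (Mn n)) (a b : Mn n) : Prop := rSet S a = rSet S b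
/-- Green's relation 𝓓: `a 𝓓 b` iff there is `c ∈ S` with `a 𝓛 c` and `c 𝓡 b`. -/
def GreenD {n : ℕ} (S : Set (Mn n)) (a b : Mn n) : Prop :=
  ∃ c ∈ S, GreenL S a c ∧ GreenR S c b
/-- Green's relation 𝓙: `a 𝓙 b` iff `SaS = SbS`. -/
def GreenJ {n : ℕ} (S : Set (Mn n)) (a b : Mn n) : Prop := jSet S a = jSet S b

def LClass {n : ℕ} (S : Set (Mn n)) (a : Mn n) : Set (Mn n) := {b ∈ S | GreenL S a b}
def RClass {n : ℕ} (S : Set (Mn n)) (a : Mn n) : Set (Mn n) := {b ∈ S | GreenR S a b}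
def DClass {n : ℕ} (S : Set (Mn n)) (a : Mn n) : Set (Mn n) := {b ∈ S | GreenD S a b}
def JClass {n : ℕ} (S : Set (Mn n)) (a : Mn n) : Set (Mn n) := {b ∈ S | GreenJ S a b}

/-- The set of idempotents in a subset `T`. -/
def idem {n : ℕ} (T : Set (Mn n)) : Set (Mn n) := {x ∈ T | x * x = x}

/-- `rng x` : the row space of `x`, i.e. the image of the linear map `v ↦ v ᵥ* x`
on row vectors (equivalently, the range of `xᵀ *ᵥ ·`). -/
noncomputable def rng {n : ℕ} (x : Mn n) : Submodule ℂ (Fin n → ℂ) :=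
  LinearMap.range xᵀ.mulVecLin

/-- `nul x` : the left null space `{v : v ᵥ* x = 0}` of `x`. -/
noncomputable def nul {n : ℕ} (x : Mn n) : Submodule ℂ (Fin n → ℂ) :=
  LinearMap.ker xᵀ.mulVecLin

/-- The row space of a `k × n` matrix `P`: the span of its rows, i.e. the image of
the linear map `v ↦ v ᵥ* P` (equivalently `v ↦ Pᵀ *ᵥ v`). -/
noncomputable def rowSpace {k n : ℕ} (P : Matrix (Fin k) (Fin n) ℂ) : Submodule ℂ (Fin n → ℂ) :=
  LinearMap.range Pᵀ.mulVecLin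

/-- Type synonym for the submodule lattice of `ℂⁿ`; the parameter `k` records which
Grassmann quotient topology (coinduced from the rank-`k` `k × n` matrices via the
row-space map) the type carries. -/
def GrassModK (n k : ℕ) : Type := Submodule ℂ (Fin n → ℂ)

def toGrass {n : ℕ} (k : ℕ) (W : Submodule ℂ (Fin n → ℂ)) : GrassModK n k := W

def toSubmodule {n k : ℕ} (W : GrassModK n k) : Submodule ℂ (Fin n → ℂ) := W

/-- The Grassmann (quotient) topology: coinduced from the euclidean topology on the
space `M(k,n;k)` of rank-`k` `k × n` matrices by the row-space map `q`. -/
noncomputable instance grassTop (n k : ℕ) : TopologicalSpace (GrassModK n k) :=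
  TopologicalSpace.coinduced
    (fun P : {P : Matrix (Fin k) (Fin n) ℂ // P.rank = k} => toGrass k (rowSpace P.1))
    inferInstance

/-- `𝖦_k`, the set of `k`-dimensional subspaces of `ℂⁿ` (in its Grassmann-topologised
ambient type); it carries the subspace topology, which agrees with the quotient
topology induced by `q`. -/
def GrassSet (n k : ℕ) : Set (GrassModK n k) :=
  {W | Module.finrank ℂ ↥(toSubmodule W) = k}

/-!
In `M_n(ℂ)`, `R_a` is the set of matrices with the column space of `a`, and `L_a` the set of
matrices with its row space. Choose `m : n × k` with the column space of `a` and `d * m = 1`. Then `P ↦ m * P` is a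
homeomorphism from the full-rank `k × n` matrices onto `R_a`, with inverse `x ↦ d * x`, and it
turns `Γ_k` into the quotient map `q`. The map `q` is open because `q⁻¹ (q U)` is the union of the
translates `g U` for `g ∈ GL_k`.

Transposition maps `L_a` onto `R_{aᵀ}` and turns `Δ_k` into `Γ_k` followed by the annihilator for
the bilinear dot product. That annihilator is an involution `𝖦_k ≃ 𝖦_{n-k}`. Continuity is the only
analytic step. Suppose `P₀ * c = 1` and the columns of `B₀` span `ker P₀`. Then the columns of
`(det (P c) • 1 - c * adj (P c) * P) * B₀` lie in `ker P` for every `P`, depend polynomially on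
`P`, and equal `B₀` at `P₀`. So they still span `ker P` for `P` near `P₀`.
-/

theorem IsOpenQuotientMap.continuous_and_range_and_isOpen_coe_image {X Y : Type*}
    [TopologicalSpace X] [TopologicalSpace Y] {s : Set Y} {F : X → s} (hF : IsOpenQuotientMap F) :
    Continuous (fun x => (F x : Y)) ∧ Set.range (fun x => (F x : Y)) = s ∧
      ∀ U : Set X, IsOpen U → IsOpen (Subtype.val ⁻¹' ((fun x => (F x : Y)) '' U) : Set s) := by
  refine ⟨continuous_subtype_val.comp hF.continuous, ?_, fun U hU => ?_⟩
  · rw [Set.range_comp' Subtype.val F, hF.surjective.range_eq, Set.image_univ,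
      Subtype.range_coe]
  · rw [← Set.image_image, Set.preimage_image_eq _ Subtype.val_injective]
    exact hF.isOpenMap U hU

section MatrixFactorization

variable {R K : Type*} [CommSemiring R] [Field K] {l m o : Type*}

theorem Matrix.exists_eq_mul_of_range_mulVecLin_le [Fintype m] [Fintype o] [DecidableEq o]
    {A : Matrix l m R} {B : Matrix l o R}
    (h : LinearMap.range B.mulVecLin ≤ LinearMap.range A.mulVecLin) :
    ∃ y : Matrix m o R, B = A * y := by
  have hcol : ∀ j, ∃ v, A *ᵥ v = B.col j := fun j => by
    obtain ⟨v, hv⟩ := h ⟨Pi.single j 1, rfl⟩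
    exact ⟨v, by simpa [Matrix.mulVec_single] using hv⟩
  choose v hv using hcol
  refine ⟨Matrix.of fun i j => v j i, Matrix.ext fun i j => ?_⟩
  rw [← Matrix.col_apply B j i, ← hv j]
  rfl

theorem Matrix.mul_eq_zero_iff_range_mulVecLin_le_ker [Fintype m] [Fintype o] [DecidableEq o]
    {A : Matrix l m R} {B : Matrix m o R} :
    A * B = 0 ↔ LinearMap.range B.mulVecLin ≤ LinearMap.ker A.mulVecLin := by
  rw [LinearMap.range_le_ker_iff, ← Matrix.mulVecLin_mul, ← Matrix.toLin'_apply',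
    ← map_zero Matrix.toLin', Matrix.toLin'.injective.eq_iff]

theorem Matrix.range_mulVecLin_mul_of_mul_eq_one [Fintype m] [Fintype o] [DecidableEq m]
    {P : Matrix m o R} {c : Matrix o m R} (h : P * c = 1) (A : Matrix l m R) :
    LinearMap.range (A * P).mulVecLin = LinearMap.range A.mulVecLin := by
  refine le_antisymm ?_ ?_
  · rw [Matrix.mulVecLin_mul]
    exact LinearMap.range_comp_le_range _ _
  · conv_lhs => rw [← Matrix.mul_one A, ← h, ← Matrix.mul_assoc, Matrix.mulVecLin_mul]
    exact LinearMap.range_comp_le_range _ _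

theorem Matrix.rank_mul_of_mul_eq_one [Fintype l] [Fintype m] [Fintype o] [DecidableEq o]
    {A : Matrix m o K} {d : Matrix o m K} (h : d * A = 1) (P : Matrix o l K) :
    (A * P).rank = P.rank :=
  le_antisymm (Matrix.rank_mul_le_right A P) <| by
    simpa [← Matrix.mul_assoc, h] using Matrix.rank_mul_le_right d (A * P)

theorem Matrix.exists_right_inverse_of_rank_eq [Fintype m] [Fintype o] [DecidableEq m]
    {P : Matrix m o K} (h : P.rank = Fintype.card m) : ∃ c : Matrix o m K, P * c = 1 := by
  refine Matrix.mulVec_surjective_iff_exists_right_inverse.1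
    (LinearMap.range_eq_top.1 (?_ : LinearMap.range P.mulVecLin = ⊤))
  exact Submodule.eq_top_of_finrank_eq (by rw [Module.finrank_fintype_fun_eq_card]; exact h)

theorem Matrix.exists_left_inverse_of_rank_eq [Fintype m] [Fintype o] [DecidableEq o]
    {A : Matrix m o K} (h : A.rank = Fintype.card o) : ∃ d : Matrix o m K, d * A = 1 := by
  obtain ⟨c, hc⟩ := Matrix.exists_right_inverse_of_rank_eq (P := Aᵀ)
    (by rw [Matrix.rank_transpose, h])
  exact ⟨cᵀ, by
    rw [← Matrix.transpose_transpose A, ← Matrix.transpose_mul, hc, Matrix.transpose_one]⟩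

theorem Matrix.rank_add_finrank_ker_mulVecLin [Fintype o] (A : Matrix m o K) :
    A.rank + Module.finrank K (LinearMap.ker A.mulVecLin) = Fintype.card o := by
  rw [Matrix.rank, LinearMap.finrank_range_add_finrank_ker, Module.finrank_fintype_fun_eq_card]

theorem Matrix.exists_range_mulVecLin_eq [Fintype m] [DecidableEq m] {k : ℕ}
    (W : Submodule K (m → K)) (h : Module.finrank K W = k) :
    ∃ A : Matrix m (Fin k) K, LinearMap.range A.mulVecLin = W := by
  let b := Module.finBasisOfFinrankEq K W h
  refine ⟨LinearMap.toMatrix' (W.subtype ∘ₗ b.equivFun.symm.toLinearMap), ?_⟩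
  rw [← Matrix.toLin'_apply', Matrix.toLin'_toMatrix', LinearMap.range_comp,
    LinearEquiv.range, Submodule.map_top, Submodule.range_subtype]

end MatrixFactorization

section RowSpace

variable {j k n : ℕ}

theorem rowSpace_transpose (B : Matrix (Fin n) (Fin k) ℂ) :
    rowSpace Bᵀ = LinearMap.range B.mulVecLin := by
  rw [rowSpace, Matrix.transpose_transpose]

theorem finrank_rowSpace (P : Matrix (Fin k) (Fin n) ℂ) : Module.finrank ℂ (rowSpace P) = P.rank :=
  Matrix.rank_transpose P

theorem rowSpace_mul_le (A : Matrix (Fin j) (Fin k) ℂ) (P : Matrix (Fin k) (Fin n) ℂ) :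
    rowSpace (A * P) ≤ rowSpace P := by
  rw [rowSpace, rowSpace, Matrix.transpose_mul, Matrix.mulVecLin_mul]
  exact LinearMap.range_comp_le_range _ _

theorem rowSpace_mul_of_mul_eq_one {A : Matrix (Fin j) (Fin k) ℂ} {d : Matrix (Fin k) (Fin j) ℂ}
    (h : d * A = 1) (P : Matrix (Fin k) (Fin n) ℂ) : rowSpace (A * P) = rowSpace P := by
  rw [rowSpace, rowSpace, Matrix.transpose_mul]
  exact Matrix.range_mulVecLin_mul_of_mul_eq_one (by rw [← Matrix.transpose_mul, h,
    Matrix.transpose_one]) _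

theorem exists_eq_mul_of_rowSpace_le {A : Matrix (Fin k) (Fin n) ℂ} {B : Matrix (Fin j) (Fin n) ℂ}
    (h : rowSpace B ≤ rowSpace A) : ∃ y : Matrix (Fin j) (Fin k) ℂ, B = y * A := by
  obtain ⟨y, hy⟩ := Matrix.exists_eq_mul_of_range_mulVecLin_le h
  exact ⟨yᵀ, by rw [← Matrix.transpose_transpose B, hy, Matrix.transpose_mul,
    Matrix.transpose_transpose]⟩

end RowSpace

section GreenClasses

variable {n : ℕ}

theorem setOf_le_eq_setOf_le_iff {α β : Type*} [PartialOrder β] (f : α → β) (a b : α) :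
    {x | f x ≤ f a} = {x | f x ≤ f b} ↔ f a = f b := by
  refine ⟨fun h => le_antisymm ?_ ?_, fun h => by rw [h]⟩
  · exact (Set.ext_iff.1 h a).1 le_rfl
  · exact (Set.ext_iff.1 h b).2 le_rfl

theorem rSet_univ (a : Mn n) :
    rSet Set.univ a = {b | LinearMap.range b.mulVecLin ≤ LinearMap.range a.mulVecLin} := by
  ext b
  refine ⟨?_, fun h => ?_⟩
  · rintro ⟨x, -, rfl⟩
    rw [Set.mem_ofPred_eq, Matrix.mulVecLin_mul]
    exact LinearMap.range_comp_le_range _ _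
  · obtain ⟨y, rfl⟩ := Matrix.exists_eq_mul_of_range_mulVecLin_le h
    exact ⟨y, Set.mem_univ _, rfl⟩

theorem lSet_univ (a : Mn n) : lSet Set.univ a = {b | rng b ≤ rng a} := by
  ext b
  refine ⟨?_, fun h => ?_⟩
  · rintro ⟨x, -, rfl⟩
    exact rowSpace_mul_le x a
  · obtain ⟨y, rfl⟩ := exists_eq_mul_of_rowSpace_le h
    exact ⟨y, Set.mem_univ _, rfl⟩

theorem mem_RClass_univ {a b : Mn n} :
    b ∈ RClass Set.univ a ↔ LinearMap.range a.mulVecLin = LinearMap.range b.mulVecLin := by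
  simp only [RClass, GreenR, rSet_univ, setOf_le_eq_setOf_le_iff, Set.mem_ofPred_eq,
    Set.mem_univ, true_and]

theorem mem_LClass_univ {a b : Mn n} : b ∈ LClass Set.univ a ↔ rng a = rng b := by
  simp only [LClass, GreenL, lSet_univ, setOf_le_eq_setOf_le_iff, Set.mem_ofPred_eq,
    Set.mem_univ, true_and]

end GreenClasses

section Grassmannian

variable {j k n : ℕ}

/-- The quotient map `q`, with codomain `𝖦_k`. -/
noncomputable def rowSpaceMap (n k : ℕ) :
    {P : Matrix (Fin k) (Fin n) ℂ // P.rank = k} → GrassSet n k :=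
  fun P => ⟨toGrass k (rowSpace P.1), (finrank_rowSpace P.1).trans P.2⟩

theorem continuous_rowSpaceMap : Continuous (rowSpaceMap n k) :=
  continuous_coinduced_rng.subtype_mk _

theorem surjective_rowSpaceMap : Function.Surjective (rowSpaceMap n k) := by
  rintro ⟨W, hW⟩
  obtain ⟨m, hm⟩ := Matrix.exists_range_mulVecLin_eq (toSubmodule W) hW
  have hrank : mᵀ.rank = k := by
    rw [Matrix.rank_transpose, Matrix.rank, hm]
    exact hW
  exact ⟨⟨mᵀ, hrank⟩, Subtype.ext ((rowSpace_transpose m).trans hm)⟩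

theorem exists_units_mul_of_rowSpace_eq {P P' : Matrix (Fin k) (Fin n) ℂ} (hP : P.rank = k)
    (h : rowSpace P' = rowSpace P) :
    ∃ g : (Matrix (Fin k) (Fin k) ℂ)ˣ, P' = (g : Matrix (Fin k) (Fin k) ℂ) * P := by
  obtain ⟨y, rfl⟩ := exists_eq_mul_of_rowSpace_le h.le
  obtain ⟨z, hz⟩ := exists_eq_mul_of_rowSpace_le h.ge
  obtain ⟨c, hc⟩ := Matrix.exists_right_inverse_of_rank_eq (P := P) (by simpa using hP)
  have hzy : z * y = 1 := by
    rw [← Matrix.mul_one (z * y), ← hc, ← Matrix.mul_assoc, Matrix.mul_assoc z, ← hz]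
  exact ⟨⟨y, z, mul_eq_one_comm.1 hzy, hzy⟩, rfl⟩

theorem isOpen_of_isOpen_preimage_rowSpaceMap {V : Set (GrassSet n k)}
    (h : IsOpen (rowSpaceMap n k ⁻¹' V)) : IsOpen V := by
  refine isOpen_induced_iff.2 ⟨Subtype.val '' V ∪ (GrassSet n k)ᶜ, ?_, ?_⟩
  · rw [isOpen_coinduced]
    convert h using 1
    ext P
    have hP : toGrass k (rowSpace P.1) ∈ GrassSet n k := (rowSpaceMap n k P).2
    simp [rowSpaceMap, hP]
  · ext W
    simp

theorem isOpenMap_rowSpaceMap : IsOpenMap (rowSpaceMap n k) := by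
  intro U hU
  apply isOpen_of_isOpen_preimage_rowSpaceMap
  let act (g : (Matrix (Fin k) (Fin k) ℂ)ˣ) (P : {P : Matrix (Fin k) (Fin n) ℂ // P.rank = k}) :
      {P : Matrix (Fin k) (Fin n) ℂ // P.rank = k} :=
    ⟨(g : Matrix (Fin k) (Fin k) ℂ) * P.1, (Matrix.rank_mul_of_mul_eq_one g.inv_mul P.1).trans P.2⟩
  have hpre : rowSpaceMap n k ⁻¹' (rowSpaceMap n k '' U) = ⋃ g, act g ⁻¹' U := by
    ext P'
    simp only [Set.mem_preimage, Set.mem_image, Set.mem_iUnion]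
    constructor
    · rintro ⟨P, hPU, hPP'⟩
      obtain ⟨g, hg⟩ := exists_units_mul_of_rowSpace_eq P.2 (congrArg Subtype.val hPP').symm
      refine ⟨g⁻¹, ?_⟩
      convert hPU
      simp [act, hg]
    · rintro ⟨g, hg⟩
      exact ⟨act g P', hg, Subtype.ext (rowSpace_mul_of_mul_eq_one g.inv_mul P'.1)⟩
  rw [hpre]
  exact isOpen_iUnion fun g =>
    hU.preimage ((continuous_const.matrix_mul continuous_subtype_val).subtype_mk _)

theorem isOpenQuotientMap_rowSpaceMap : IsOpenQuotientMap (rowSpaceMap n k) :=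
  ⟨surjective_rowSpaceMap, continuous_rowSpaceMap, isOpenMap_rowSpaceMap⟩

theorem isOpen_setOf_rank_eq : IsOpen {P : Matrix (Fin k) (Fin n) ℂ | P.rank = k} := by
  refine isOpen_iff_mem_nhds.2 fun P₀ hP₀ => ?_
  obtain ⟨c, hc⟩ := Matrix.exists_right_inverse_of_rank_eq (P := P₀) (by simpa using hP₀)
  have hdet : ContinuousAt (fun P : Matrix (Fin k) (Fin n) ℂ => (P * c).det) P₀ :=
    (continuous_id.matrix_mul continuous_const).matrix_det.continuousAt
  filter_upwards [hdet.eventually_ne (by simp [hc] : (P₀ * c).det ≠ 0)] with P hP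
  refine le_antisymm (Matrix.rank_le_height P) ?_
  simpa [Matrix.rank_of_det_ne_zero hP] using Matrix.rank_mul_le_left P c

theorem continuousAt_rowSpace {N₀ : Matrix (Fin k) (Fin n) ℂ} (h : N₀.rank = k) :
    ContinuousAt (fun N => toGrass k (rowSpace N)) N₀ :=
  (continuousOn_iff_continuous_domRestrict.2 continuous_coinduced_rng).continuousAt
    (isOpen_setOf_rank_eq.mem_nhds h)

end Grassmannian

section DotAnnihilator

variable {K ι : Type*} [Field K] [Fintype ι]

def dotAnnihilator (W : Submodule K (ι → K)) : Submodule K (ι → K) :=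
  W.orthogonalBilin (dotProductBilin K K)

theorem dotAnnihilator_range_mulVecLin {κ : Type*} [Fintype κ] (A : Matrix ι κ K) :
    dotAnnihilator (LinearMap.range A.mulVecLin) = LinearMap.ker Aᵀ.mulVecLin := by
  ext v
  simp only [dotAnnihilator, Submodule.mem_orthogonalBilin_iff, LinearMap.mem_range,
    forall_exists_index, forall_apply_eq_imp_iff, dotProductBilin_apply_apply,
    LinearMap.mem_ker, Matrix.mulVecLin_apply]
  rw [← dotProduct_eq_zero_iff]
  simp_rw [dotProduct_comm (A *ᵥ _), Matrix.dotProduct_mulVec, Matrix.mulVec_transpose]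

theorem finrank_dotAnnihilator_add_finrank [DecidableEq ι] (W : Submodule K (ι → K)) :
    Module.finrank K (dotAnnihilator W) + Module.finrank K W = Fintype.card ι := by
  obtain ⟨A, hA⟩ := Matrix.exists_range_mulVecLin_eq W rfl
  rw [← hA, dotAnnihilator_range_mulVecLin, ← Matrix.rank_add_finrank_ker_mulVecLin Aᵀ,
    Matrix.rank_transpose, add_comm]
  rfl

theorem dotAnnihilator_dotAnnihilator [DecidableEq ι] (W : Submodule K (ι → K)) :
    dotAnnihilator (dotAnnihilator W) = W := by
  have hW := finrank_dotAnnihilator_add_finrank W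
  have hW' := finrank_dotAnnihilator_add_finrank (dotAnnihilator W)
  refine (Submodule.eq_of_le_of_finrank_eq ?_ (by omega)).symm
  exact Submodule.le_orthogonalBilin_orthogonalBilin fun x y h => by
    simpa [dotProduct_comm] using h

end DotAnnihilator

section KerLift

variable {R : Type*} [CommRing R] {ι κ μ : Type*} [Fintype ι] [Fintype κ] [DecidableEq ι]
  [DecidableEq κ]

def Matrix.kerLift (c : Matrix ι κ R) (B₀ : Matrix ι μ R) (P : Matrix κ ι R) : Matrix ι μ R :=
  ((P * c).det • 1 - c * (P * c).adjugate * P) * B₀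

theorem Matrix.mul_kerLift (c : Matrix ι κ R) (B₀ : Matrix ι μ R) (P : Matrix κ ι R) :
    P * Matrix.kerLift c B₀ P = 0 := by
  rw [Matrix.kerLift, ← Matrix.mul_assoc, Matrix.mul_sub, ← Matrix.mul_assoc, ← Matrix.mul_assoc,
    Matrix.mul_adjugate, Matrix.mul_smul, Matrix.mul_one, Matrix.smul_mul, Matrix.one_mul, sub_self,
    Matrix.zero_mul]

theorem Matrix.kerLift_of_mul_eq {c : Matrix ι κ R} {B₀ : Matrix ι μ R} {P : Matrix κ ι R}
    (hc : P * c = 1) (hB₀ : P * B₀ = 0) : Matrix.kerLift c B₀ P = B₀ := by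
  rw [Matrix.kerLift, hc, Matrix.det_one, Matrix.adjugate_one, one_smul, Matrix.mul_one,
    Matrix.sub_mul, Matrix.one_mul, Matrix.mul_assoc, hB₀, Matrix.mul_zero, sub_zero]

theorem Matrix.continuous_kerLift [TopologicalSpace R] [IsTopologicalRing R] (c : Matrix ι κ R)
    (B₀ : Matrix ι μ R) : Continuous (Matrix.kerLift c B₀) := by
  unfold Matrix.kerLift
  fun_prop

end KerLift

section GrassmannDuality

variable {j k n : ℕ}

theorem finrank_ker_mulVecLin_of_rank_eq {P : Matrix (Fin k) (Fin n) ℂ} (hP : P.rank = k)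
    (h : j + k = n) : Module.finrank ℂ (LinearMap.ker P.mulVecLin) = j := by
  have := Matrix.rank_add_finrank_ker_mulVecLin P
  rw [Fintype.card_fin] at this
  omega

noncomputable def annihilatorMap (h : j + k = n) : GrassSet n k → GrassSet n j :=
  fun W => ⟨toGrass j (dotAnnihilator (toSubmodule W.1)), by
    have := finrank_dotAnnihilator_add_finrank (toSubmodule W.1)
    rw [Fintype.card_fin, W.2] at this
    exact Nat.add_right_cancel (this.trans h.symm)⟩

theorem continuous_annihilatorMap (h : j + k = n) : Continuous (annihilatorMap h) := by
  rw [← isOpenQuotientMap_rowSpaceMap.continuous_comp_iff, continuous_induced_rng,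
    continuous_iff_continuousAt]
  rintro ⟨P₀, hP₀⟩
  obtain ⟨c, hc⟩ := Matrix.exists_right_inverse_of_rank_eq (P := P₀) (by simpa using hP₀)
  obtain ⟨B₀, hB₀⟩ := Matrix.exists_range_mulVecLin_eq _ (finrank_ker_mulVecLin_of_rank_eq hP₀ h)
  have hrank : (Matrix.kerLift c B₀ P₀)ᵀ.rank = j := by
    rw [Matrix.kerLift_of_mul_eq hc (Matrix.mul_eq_zero_iff_range_mulVecLin_le_ker.2 hB₀.le),
      Matrix.rank_transpose, Matrix.rank, hB₀, finrank_ker_mulVecLin_of_rank_eq hP₀ h]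
  have hlift : Continuous fun P : {P : Matrix (Fin k) (Fin n) ℂ // P.rank = k} =>
      (Matrix.kerLift c B₀ P.1)ᵀ :=
    ((Matrix.continuous_kerLift c B₀).comp continuous_subtype_val).matrix_transpose
  have hcont : ContinuousAt (fun P : {P : Matrix (Fin k) (Fin n) ℂ // P.rank = k} =>
      toGrass j (rowSpace (Matrix.kerLift c B₀ P.1)ᵀ)) ⟨P₀, hP₀⟩ :=
    ContinuousAt.comp (g := fun N => toGrass j (rowSpace N)) (continuousAt_rowSpace hrank)
      hlift.continuousAt
  refine hcont.congr ?_
  filter_upwards [hlift.continuousAt.preimage_mem_nhds (isOpen_setOf_rank_eq.mem_nhds hrank)]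
    with P hP
  change toGrass j (rowSpace (Matrix.kerLift c B₀ P.1)ᵀ) =
    toGrass j (dotAnnihilator (LinearMap.range P.1ᵀ.mulVecLin))
  rw [dotAnnihilator_range_mulVecLin, Matrix.transpose_transpose, rowSpace_transpose]
  refine congrArg (toGrass j) (Submodule.eq_of_le_of_finrank_eq
    (Matrix.mul_eq_zero_iff_range_mulVecLin_le_ker.1 (Matrix.mul_kerLift c B₀ P.1)) ?_)
  rw [finrank_ker_mulVecLin_of_rank_eq P.2 h]
  exact (Matrix.rank_transpose _).symm.trans hP

noncomputable def grassDualHomeomorph (h : j + k = n) : GrassSet n k ≃ₜ GrassSet n j where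
  toFun := annihilatorMap h
  invFun := annihilatorMap ((add_comm k j).trans h)
  left_inv W := Subtype.ext (dotAnnihilator_dotAnnihilator (toSubmodule W.1))
  right_inv W := Subtype.ext (dotAnnihilator_dotAnnihilator (toSubmodule W.1))
  continuous_toFun := continuous_annihilatorMap h
  continuous_invFun := continuous_annihilatorMap _

end GrassmannDuality

section GreenClassMaps

variable {k n : ℕ}

theorem rank_eq_of_mem_RClass {a x : Mn n} (hx : x ∈ RClass Set.univ a) : x.rank = a.rank := by
  rw [Matrix.rank, Matrix.rank, mem_RClass_univ.1 hx]

theorem finrank_rng (x : Mn n) : Module.finrank ℂ (rng x) = x.rank :=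
  finrank_rowSpace x

theorem rank_eq_of_mem_LClass {a x : Mn n} (hx : x ∈ LClass Set.univ a) : x.rank = a.rank := by
  rw [← finrank_rng, ← finrank_rng, mem_LClass_univ.1 hx]

section RClassChart

variable {a : Mn n} {m : Matrix (Fin n) (Fin k) ℂ} {d : Matrix (Fin k) (Fin n) ℂ}

theorem mul_mul_eq_of_mem_RClass (hdm : d * m = 1)
    (hm : LinearMap.range m.mulVecLin = LinearMap.range a.mulVecLin) {x : Mn n}
    (hx : x ∈ RClass Set.univ a) : m * (d * x) = x := by
  obtain ⟨y, rfl⟩ := Matrix.exists_eq_mul_of_range_mulVecLin_le (hm.trans (mem_RClass_univ.1 hx)).ge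
  rw [← Matrix.mul_assoc d, hdm, Matrix.one_mul]

theorem rank_mul_of_mem_RClass (hdm : d * m = 1)
    (hm : LinearMap.range m.mulVecLin = LinearMap.range a.mulVecLin) {x : Mn n}
    (hx : x ∈ RClass Set.univ a) : (d * x).rank = k := by
  have hmk : m.rank = k := by
    simpa using Matrix.rank_mul_of_mul_eq_one hdm (1 : Matrix (Fin k) (Fin k) ℂ)
  rw [← Matrix.rank_mul_of_mul_eq_one hdm, mul_mul_eq_of_mem_RClass hdm hm hx,
    rank_eq_of_mem_RClass hx, Matrix.rank, ← hm]
  exact hmk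

noncomputable def rClassHomeomorph (hdm : d * m = 1)
    (hm : LinearMap.range m.mulVecLin = LinearMap.range a.mulVecLin) :
    {P : Matrix (Fin k) (Fin n) ℂ // P.rank = k} ≃ₜ RClass Set.univ a where
  toFun P := ⟨m * P.1, mem_RClass_univ.2 <| by
    obtain ⟨c, hc⟩ := Matrix.exists_right_inverse_of_rank_eq (P := P.1) (by simpa using P.2)
    rw [Matrix.range_mulVecLin_mul_of_mul_eq_one hc, hm]⟩
  invFun x := ⟨d * x.1, rank_mul_of_mem_RClass hdm hm x.2⟩
  left_inv P := Subtype.ext (by simp [← Matrix.mul_assoc, hdm])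
  right_inv x := Subtype.ext (mul_mul_eq_of_mem_RClass hdm hm x.2)
  continuous_toFun := (continuous_const.matrix_mul continuous_subtype_val).subtype_mk _
  continuous_invFun := (continuous_const.matrix_mul continuous_subtype_val).subtype_mk _

end RClassChart

noncomputable def rClassRowSpace (a : Mn n) (hak : a.rank = k) :
    RClass Set.univ a → GrassSet n k :=
  fun x => ⟨toGrass k (rng x.1), (finrank_rng x.1).trans ((rank_eq_of_mem_RClass x.2).trans hak)⟩

theorem isOpenQuotientMap_rClassRowSpace (a : Mn n) (hak : a.rank = k) :
    IsOpenQuotientMap (rClassRowSpace a hak) := by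
  obtain ⟨m, hm⟩ := Matrix.exists_range_mulVecLin_eq (LinearMap.range a.mulVecLin) hak
  obtain ⟨d, hdm⟩ := Matrix.exists_left_inverse_of_rank_eq (A := m) (by
    rw [Fintype.card_fin, Matrix.rank, hm]
    exact hak)
  have hcomp : rClassRowSpace a hak ∘ rClassHomeomorph hdm hm = rowSpaceMap n k :=
    funext fun P => Subtype.ext (rowSpace_mul_of_mul_eq_one hdm P.1)
  rw [← (rClassHomeomorph hdm hm).isOpenQuotient_comp_iff, hcomp]
  exact isOpenQuotientMap_rowSpaceMap

def lClassTransposeHomeomorph (a : Mn n) : LClass Set.univ a ≃ₜ RClass Set.univ aᵀ where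
  toFun x := ⟨x.1ᵀ, mem_RClass_univ.2 (mem_LClass_univ.1 x.2)⟩
  invFun x := ⟨x.1ᵀ, mem_LClass_univ.2 <| (mem_RClass_univ.1 x.2).trans
    (rowSpace_transpose x.1).symm⟩
  left_inv _ := Subtype.ext (Matrix.transpose_transpose _)
  right_inv _ := Subtype.ext (Matrix.transpose_transpose _)
  continuous_toFun := continuous_subtype_val.matrix_transpose.subtype_mk _
  continuous_invFun := continuous_subtype_val.matrix_transpose.subtype_mk _

noncomputable def lClassNul (a : Mn n) (hak : a.rank = k) :
    LClass Set.univ a → GrassSet n (n - k) :=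
  fun x => ⟨toGrass (n - k) (nul x.1), by
    have := Matrix.rank_add_finrank_ker_mulVecLin x.1ᵀ
    rw [Matrix.rank_transpose, rank_eq_of_mem_LClass x.2, hak, Fintype.card_fin] at this
    exact (Nat.sub_eq_of_eq_add' this.symm).symm⟩

theorem lClassNul_eq (a : Mn n) (hak : a.rank = k) (h : n - k + k = n) :
    lClassNul a hak = grassDualHomeomorph h ∘
      rClassRowSpace aᵀ ((Matrix.rank_transpose a).trans hak) ∘ lClassTransposeHomeomorph a := by
  funext x
  refine Subtype.ext ?_
  change toGrass (n - k) (nul x.1) = toGrass (n - k) (dotAnnihilator (rng x.1ᵀ))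
  rw [rng, Matrix.transpose_transpose, dotAnnihilator_range_mulVecLin]
  rfl

theorem isOpenQuotientMap_lClassNul (a : Mn n) (hak : a.rank = k) :
    IsOpenQuotientMap (lClassNul a hak) := by
  have hkn : n - k + k = n := Nat.sub_add_cancel (hak ▸ Matrix.rank_le_width a)
  rw [lClassNul_eq a hak hkn, (grassDualHomeomorph hkn).comp_isOpenQuotientMap_iff]
  exact (isOpenQuotientMap_rClassRowSpace _ _).comp (lClassTransposeHomeomorph a).isOpenQuotientMap

end GreenClassMaps

theorem stmt_9_general {n k : ℕ}
    (a : Mn n) (hak : a.rank = k) :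
    (Continuous (fun x : ↥(RClass Set.univ a) => toGrass k (rng x.1)) ∧
     Set.range (fun x : ↥(RClass Set.univ a) => toGrass k (rng x.1)) = GrassSet n k ∧
     ∀ U : Set ↥(RClass Set.univ a), IsOpen U →
       IsOpen (Subtype.val ⁻¹'
         ((fun x : ↥(RClass Set.univ a) => toGrass k (rng x.1)) '' U) :
           Set ↥(GrassSet n k))) ∧
    (Continuous (fun x : ↥(LClass Set.univ a) => toGrass (n - k) (nul x.1)) ∧
     Set.range (fun x : ↥(LClass Set.univ a) => toGrass (n - k) (nul x.1))
       = GrassSet n (n - k) ∧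
     ∀ U : Set ↥(LClass Set.univ a), IsOpen U →
       IsOpen (Subtype.val ⁻¹'
         ((fun x : ↥(LClass Set.univ a) => toGrass (n - k) (nul x.1)) '' U) :
           Set ↥(GrassSet n (n - k)))) :=
  ⟨(isOpenQuotientMap_rClassRowSpace a hak).continuous_and_range_and_isOpen_coe_image,
    (isOpenQuotientMap_lClassNul a hak).continuous_and_range_and_isOpen_coe_image⟩

/-- For `a ∈ Mn n` of rank `k` (`1 ≤ k ≤ n - 1`), the restriction of
`Γ_k : x ↦ rng x` to the Green class `R_a` of `Mn n` is a continuous open surjection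
onto `𝖦_k`, and the restriction of `Δ_k : x ↦ nul x` to `L_a` is a continuous open
surjection onto `𝖦_{n-k}`. -/
theorem stmt_9 {n k : ℕ} (hk1 : 1 ≤ k) (hk2 : k ≤ n - 1)
    (a : Mn n) (hak : a.rank = k) :
    (Continuous (fun x : ↥(RClass Set.univ a) => toGrass k (rng x.1)) ∧
     Set.range (fun x : ↥(RClass Set.univ a) => toGrass k (rng x.1)) = GrassSet n k ∧
     ∀ U : Set ↥(RClass Set.univ a), IsOpen U →
       IsOpen (Subtype.val ⁻¹'
         ((fun x : ↥(RClass Set.univ a) => toGrass k (rng x.1)) '' U) :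
           Set ↥(GrassSet n k))) ∧
    (Continuous (fun x : ↥(LClass Set.univ a) => toGrass (n - k) (nul x.1)) ∧
     Set.range (fun x : ↥(LClass Set.univ a) => toGrass (n - k) (nul x.1))
       = GrassSet n (n - k) ∧
     ∀ U : Set ↥(LClass Set.univ a), IsOpen U →
       IsOpen (Subtype.val ⁻¹'
         ((fun x : ↥(LClass Set.univ a) => toGrass (n - k) (nul x.1)) '' U) :
           Set ↥(GrassSet n (n - k)))) :=
  stmt_9_general a hak
end

section
/- Let M be a regular irreducible algebraic monoid in M_n(ℂ) and let e ∈ M be an idempotent. Then {(rng(f), nul(f)) : f ∈ E(D_e^M)} = {(W, N) ∈ 𝖦_e^l × 𝖦_e^r : W ⊕ N = ℂ^n}, where W ⊕ N = ℂ^n means W ∩ N = {0} and W + N = ℂ^n. -/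
open Matrix

/-!
An idempotent `f` acts on row vectors as the projection onto `rng f` along `nul f`, which gives
one inclusion. Conversely, let `x, y ∈ D_e` with `rng x ⊕ nul y = ℂⁿ`. Regularity gives an
idempotent `f ∈ M` with `rng f = rng x`; if `z ∈ M` is an inner inverse of `fy`, then
`d = yzf ∈ M` fixes `rng f` (as `f d y = fy`) and kills `nul y`, so `d` is the projection onto
`rng x` along `nul y`. In a regular monoid of matrices two elements are `𝓡`-related as soon as
they have the same left null space, so `d` is `𝓡`-related to the element of `D_e` that is
`𝓡`-related to `y`, and `d ∈ D_e`.
-/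

section RowSpaces

variable {n : ℕ}

lemma mem_rng {x : Mn n} {v : Fin n → ℂ} : v ∈ rng x ↔ ∃ u, u ᵥ* x = v := by
  simp [rng]

lemma mem_nul {x : Mn n} {v : Fin n → ℂ} : v ∈ nul x ↔ v ᵥ* x = 0 := by
  simp [nul]

lemma rng_mul_le (a b : Mn n) : rng (a * b) ≤ rng b := by
  intro v hv
  obtain ⟨u, rfl⟩ := mem_rng.1 hv
  exact mem_rng.2 ⟨u ᵥ* a, vecMul_vecMul u a b⟩

lemma nul_le_nul_mul (a b : Mn n) : nul a ≤ nul (a * b) := by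
  intro v hv
  rw [mem_nul] at hv ⊢
  rw [← vecMul_vecMul, hv, zero_vecMul]

lemma rng_mul_eq_of_mul_mul_eq {x u : Mn n} (h : x * u * x = x) : rng (u * x) = rng x :=
  le_antisymm (rng_mul_le u x) <| by
    calc rng x = rng (x * (u * x)) := by rw [← mul_assoc, h]
      _ ≤ rng (u * x) := rng_mul_le x (u * x)

lemma IsIdempotentElem.vecMul_eq_self_of_mem_rng {f : Mn n} (hf : IsIdempotentElem f)
    {w : Fin n → ℂ} (hw : w ∈ rng f) : w ᵥ* f = w := by
  obtain ⟨u, rfl⟩ := mem_rng.1 hw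
  rw [vecMul_vecMul, hf.eq]

lemma IsIdempotentElem.isCompl_rng_nul {f : Mn n} (hf : IsIdempotentElem f) :
    IsCompl (rng f) (nul f) := by
  refine LinearMap.IsIdempotentElem.isCompl ?_
  rw [IsIdempotentElem, Module.End.mul_eq_comp, ← mulVecLin_mul, ← transpose_mul, hf.eq]

lemma isIdempotentElem_rng_nul_of_isCompl {W N : Submodule ℂ (Fin n → ℂ)} (hWN : IsCompl W N)
    {d : Mn n} (hW : ∀ w ∈ W, w ᵥ* d = w) (hN : N ≤ nul d) :
    IsIdempotentElem d ∧ rng d = W ∧ nul d = N := by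
  have hproj : ∀ v, ∃ w ∈ W, ∃ m ∈ N, w + m = v ∧ v ᵥ* d = w := by
    intro v
    obtain ⟨w, hw, m, hm, rfl⟩ := Submodule.mem_sup.1
      (hWN.sup_eq_top ▸ Submodule.mem_top : v ∈ W ⊔ N)
    refine ⟨w, hw, m, hm, rfl, ?_⟩
    rw [add_vecMul, hW w hw, mem_nul.1 (hN hm), add_zero]
  refine ⟨ext_iff_vecMul.2 fun v => ?_, le_antisymm ?_ fun w hw => ?_, le_antisymm ?_ hN⟩
  · obtain ⟨w, hw, -, -, -, hv⟩ := hproj v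
    rw [← vecMul_vecMul, hv, hW w hw]
  · intro v hv
    obtain ⟨u, rfl⟩ := mem_rng.1 hv
    obtain ⟨w, hw, -, -, -, hu⟩ := hproj u
    exact hu ▸ hw
  · exact mem_rng.2 ⟨w, hW w hw⟩
  · intro v hv
    obtain ⟨w, -, m, hm, rfl, hv'⟩ := hproj v
    rw [mem_nul.1 hv] at hv'
    rwa [← hv', zero_add]

lemma eq_mul_of_nul_le {a b u : Mn n} (hu : a * u * a = a) (h : nul a ≤ nul b) :
    b = a * (u * b) := by
  have hrows : ∀ v, v ᵥ* (1 - a * u) ∈ nul a := fun v => by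
    rw [mem_nul, vecMul_vecMul, sub_mul, one_mul, hu, sub_self, vecMul_zero]
  refine ext_iff_vecMul.2 fun v => ?_
  have := mem_nul.1 (h (hrows v))
  rwa [vecMul_vecMul, sub_mul, one_mul, mul_assoc, vecMul_sub, sub_eq_zero] at this

end RowSpaces

section GreenRelations

variable {n : ℕ} {M : Set (Mn n)}

structure IsRegularMonoid (M : Set (Mn n)) : Prop where
  one_mem : (1 : Mn n) ∈ M
  mul_mem : ∀ a ∈ M, ∀ b ∈ M, a * b ∈ M
  regular : ∀ a ∈ M, ∃ x ∈ M, a * x * a = a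

lemma IsRegIrrAlgMonoid.isRegularMonoid (hM : IsRegIrrAlgMonoid M) : IsRegularMonoid M :=
  ⟨hM.one_mem, hM.mul_mem, hM.regular⟩

lemma self_mem_rSet (h1 : (1 : Mn n) ∈ M) (a : Mn n) : a ∈ rSet M a :=
  ⟨1, h1, (mul_one a).symm⟩

lemma nul_le_of_mem_rSet {a b : Mn n} (h : b ∈ rSet M a) : nul a ≤ nul b := by
  obtain ⟨s, -, rfl⟩ := h
  exact nul_le_nul_mul a s

lemma rSet_subset_of_eq_mul (hmul : ∀ a ∈ M, ∀ b ∈ M, a * b ∈ M) {a b s : Mn n} (hs : s ∈ M)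
    (h : b = a * s) : rSet M b ⊆ rSet M a := by
  rintro _ ⟨t, ht, rfl⟩
  exact ⟨s * t, hmul s hs t ht, by rw [h, mul_assoc]⟩

lemma GreenR.nul_eq (h1 : (1 : Mn n) ∈ M) {a b : Mn n} (h : GreenR M a b) : nul a = nul b :=
  le_antisymm (nul_le_of_mem_rSet (h ▸ self_mem_rSet h1 b))
    (nul_le_of_mem_rSet (h.symm ▸ self_mem_rSet h1 a))

namespace IsRegularMonoid

lemma greenR_of_nul_eq (hM : IsRegularMonoid M) {a b : Mn n} (ha : a ∈ M) (hb : b ∈ M)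
    (h : nul a = nul b) : GreenR M a b := by
  obtain ⟨u, hu, hau⟩ := hM.regular a ha
  obtain ⟨v, hv, hbv⟩ := hM.regular b hb
  exact Set.Subset.antisymm
    (rSet_subset_of_eq_mul hM.mul_mem (hM.mul_mem v hv a ha) (eq_mul_of_nul_le hbv h.ge))
    (rSet_subset_of_eq_mul hM.mul_mem (hM.mul_mem u hu b hb) (eq_mul_of_nul_le hau h.le))

lemma mem_dClass_of_nul_eq (hM : IsRegularMonoid M) {e y d : Mn n} (hy : y ∈ DClass M e)
    (hd : d ∈ M) (h : nul d = nul y) : d ∈ DClass M e := by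
  obtain ⟨-, c, hc, hec, hcy⟩ := hy
  exact ⟨hd, c, hc, hec, hM.greenR_of_nul_eq hc hd ((hcy.nul_eq hM.one_mem).trans h.symm)⟩

lemma exists_idempotent_rng_eq (hM : IsRegularMonoid M) {x : Mn n} (hx : x ∈ M) :
    ∃ f ∈ M, IsIdempotentElem f ∧ rng f = rng x := by
  obtain ⟨u, hu, hxu⟩ := hM.regular x hx
  refine ⟨u * x, hM.mul_mem u hu x hx, ?_, rng_mul_eq_of_mul_mul_eq hxu⟩
  rw [IsIdempotentElem, mul_assoc, ← mul_assoc x, hxu]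

lemma exists_idempotent_rng_nul_of_isIdempotentElem (hM : IsRegularMonoid M) {f y : Mn n}
    (hf : f ∈ M) (hff : IsIdempotentElem f) (hy : y ∈ M) (hc : IsCompl (rng f) (nul y)) :
    ∃ d ∈ M, IsIdempotentElem d ∧ rng d = rng f ∧ nul d = nul y := by
  obtain ⟨z, hz, hfyz⟩ := hM.regular (f * y) (hM.mul_mem f hf y hy)
  refine ⟨y * z * f, hM.mul_mem _ (hM.mul_mem y hy z hz) f hf,
    isIdempotentElem_rng_nul_of_isCompl hc (fun w hw => ?_) (mul_assoc y z f ▸ nul_le_nul_mul _ _)⟩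
  have hwf : w ᵥ* f = w := hff.vecMul_eq_self_of_mem_rng hw
  have hmem_rng : w ᵥ* (y * z * f) - w ∈ rng f :=
    sub_mem (rng_mul_le _ f (mem_rng.2 ⟨w, rfl⟩)) hw
  have hmem_nul : w ᵥ* (y * z * f) - w ∈ nul y := by
    have hfdy : f * (y * z * f * y) = f * y := by simpa only [mul_assoc] using hfyz
    rw [mem_nul, sub_vecMul, vecMul_vecMul, ← hwf, vecMul_vecMul, vecMul_vecMul, hfdy, sub_self]
  exact sub_eq_zero.1 (Submodule.disjoint_def.1 hc.disjoint _ hmem_rng hmem_nul)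

lemma exists_idempotent_rng_nul (hM : IsRegularMonoid M) {x y : Mn n} (hx : x ∈ M) (hy : y ∈ M)
    (hc : IsCompl (rng x) (nul y)) :
    ∃ d ∈ M, IsIdempotentElem d ∧ rng d = rng x ∧ nul d = nul y := by
  obtain ⟨f, hf, hff, hfx⟩ := hM.exists_idempotent_rng_eq hx
  rw [← hfx] at hc ⊢
  exact hM.exists_idempotent_rng_nul_of_isIdempotentElem hf hff hy hc

end IsRegularMonoid

end GreenRelations

theorem stmt_18_general {n : ℕ} (M : Set (Mn n)) (hM : IsRegIrrAlgMonoid M) (e : Mn n) :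
    (fun f => (rng f, nul f)) '' idem (DClass M e)
      = {p : Submodule ℂ (Fin n → ℂ) × Submodule ℂ (Fin n → ℂ) |
          p.1 ∈ rng '' DClass M e ∧ p.2 ∈ nul '' DClass M e ∧
          p.1 ⊓ p.2 = ⊥ ∧ p.1 ⊔ p.2 = ⊤} := by
  ext ⟨W, N⟩
  simp only [Set.mem_image, Set.mem_ofPred_eq, Prod.mk.injEq]
  constructor
  · rintro ⟨f, ⟨hfD, hff⟩, rfl, rfl⟩
    have hc := IsIdempotentElem.isCompl_rng_nul hff
    exact ⟨⟨f, hfD, rfl⟩, ⟨f, hfD, rfl⟩, hc.inf_eq_bot, hc.sup_eq_top⟩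
  · rintro ⟨⟨x, hxD, rfl⟩, ⟨y, hyD, rfl⟩, hinf, hsup⟩
    have hR := hM.isRegularMonoid
    obtain ⟨d, hdM, hdd, hrng, hnul⟩ :=
      hR.exists_idempotent_rng_nul hxD.1 hyD.1 ⟨disjoint_iff.2 hinf, codisjoint_iff.2 hsup⟩
    exact ⟨d, ⟨hR.mem_dClass_of_nul_eq hyD hdM hnul, hdd⟩, hrng, hnul⟩

/-- For an idempotent `e ∈ M`:
`{(rng f, nul f) : f ∈ E(D_e^M)} = {(W, N) ∈ 𝖦_e^l × 𝖦_e^r : W ⊕ N = ℂⁿ}`,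
where `W ⊕ N = ℂⁿ` means `W ∩ N = 0` and `W + N = ℂⁿ`. -/
theorem stmt_18 {n : ℕ} (M : Set (Mn n)) (hM : IsRegIrrAlgMonoid M)
    (e : Mn n) (he : e ∈ M) (hee : e * e = e) :
    (fun f => (rng f, nul f)) '' idem (DClass M e)
      = {p : Submodule ℂ (Fin n → ℂ) × Submodule ℂ (Fin n → ℂ) |
          p.1 ∈ rng '' DClass M e ∧ p.2 ∈ nul '' DClass M e ∧
          p.1 ⊓ p.2 = ⊥ ∧ p.1 ⊔ p.2 = ⊤} :=
  stmt_18_general M hM e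
end
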